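/- Let {Ξ_{n,k}} be an N-dimensional standard triangular array and let {Ξ⁰_{n,k}} be an independent copy of {Ξ_{n,k}} (i.e. an N-STA independent of {Ξ_{n,k}} with the same joint distributions). If {Ξ_{n,k}} is infinitesimal, i.e. for every ε > 0, max_{1 ≤ k ≤ n} P[|Ξ_{n,k}| > ε] → 0 as n → ∞, then L({Ξ_{n,k}}, {Ξ⁰_{n,k}}) = 0, where L({Ξ_{n,k}}, {Ξ⁰_{n,k}}) = sup_{t ∈ ℝ^N} limsup_{n → ∞} Σ_{k=1}^n E[|Ξ_{n,k}|² ; |⟨Ξ⁰_{n,k}, t⟩| > 1]. -/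

import Mathlib

/-!
Fix `t`. Since `Ξ⁰` is independent of `Ξ`, the `k`-th summand factors as
`E|Ξ_{n,k}|² · P[|⟨Ξ⁰_{n,k}, t⟩| > 1]`, and since `Ξ⁰_{n,k}` has the law of `Ξ_{n,k}`, Cauchy–Schwarz
bounds the probability by `P[|Ξ_{n,k}| > 1/(|t| + 1)]`. Independence and centring make the second
moments of a row add up to the trace `N` of the identity covariance, so the row sum is at most
`N · max_k P[|Ξ_{n,k}| > 1/(|t| + 1)]`, which tends to `0` by infinitesimality.
-/

open MeasureTheory ProbabilityTheory Filter Finset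
open scoped RealInnerProductSpace

section
variable {Ω : Type*} [MeasurableSpace Ω] {μ : Measure Ω}

lemma integral_sq_sum_eq_sum_integral_sq [IsFiniteMeasure μ] {ι : Type*} {s : Finset ι}
    {Y : ι → Ω → ℝ} (hY : ∀ i ∈ s, MemLp (Y i) 2 μ) (hmean : ∀ i ∈ s, μ[Y i] = 0)
    (hind : Set.Pairwise ↑s fun i j => Y i ⟂ᵢ[μ] Y j) :
    ∫ ω, (∑ i ∈ s, Y i ω) ^ 2 ∂μ = ∑ i ∈ s, ∫ ω, Y i ω ^ 2 ∂μ := by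
  have hsum : μ[∑ i ∈ s, Y i] = 0 := by
    rw [Finset.sum_fn, integral_finsetSum s fun i hi => (hY i hi).integrable one_le_two]
    exact Finset.sum_eq_zero hmean
  calc ∫ ω, (∑ i ∈ s, Y i ω) ^ 2 ∂μ = Var[∑ i ∈ s, Y i; μ] := by
        rw [variance_of_integral_eq_zero (s.aemeasurable_sum fun i hi => (hY i hi).aemeasurable)
          hsum, Finset.sum_fn]
    _ = ∑ i ∈ s, Var[Y i; μ] := IndepFun.variance_sum hY hind
    _ = ∑ i ∈ s, ∫ ω, Y i ω ^ 2 ∂μ := sum_congr rfl fun i hi =>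
        variance_of_integral_eq_zero (hY i hi).aemeasurable (hmean i hi)

lemma integral_norm_sq_eq_sum_integral_sq {ι : Type*} [Fintype ι]
    {Z : Ω → EuclideanSpace ℝ ι} (hZ : MemLp Z 2 μ) :
    ∫ ω, ‖Z ω‖ ^ 2 ∂μ = ∑ i, ∫ ω, Z ω i ^ 2 ∂μ := by
  simp_rw [EuclideanSpace.norm_sq_eq, Real.norm_eq_abs, sq_abs]
  exact integral_finsetSum _ fun i _ =>
    ((EuclideanSpace.proj (𝕜 := ℝ) i).comp_memLp' hZ).integrable_sq

lemma sum_integral_norm_sq_eq_card [IsFiniteMeasure μ] {ι κ : Type*} [Fintype ι]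
    {s : Finset κ} {Y : κ → Ω → EuclideanSpace ℝ ι} (hY : ∀ k ∈ s, MemLp (Y k) 2 μ)
    (hmean : ∀ k ∈ s, ∀ l, ∫ ω, Y k ω l ∂μ = 0)
    (hind : Set.Pairwise ↑s fun j k => Y j ⟂ᵢ[μ] Y k)
    (hvar : ∀ l, ∫ ω, (∑ k ∈ s, Y k ω l) ^ 2 ∂μ = 1) :
    ∑ k ∈ s, ∫ ω, ‖Y k ω‖ ^ 2 ∂μ = Fintype.card ι := by
  have hproj : ∀ l, Measurable fun y : EuclideanSpace ℝ ι => y l := fun l =>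
    (EuclideanSpace.proj (𝕜 := ℝ) l).continuous.measurable
  calc ∑ k ∈ s, ∫ ω, ‖Y k ω‖ ^ 2 ∂μ = ∑ l, ∑ k ∈ s, ∫ ω, Y k ω l ^ 2 ∂μ := by
        rw [Finset.sum_comm]
        exact sum_congr rfl fun k hk => integral_norm_sq_eq_sum_integral_sq (hY k hk)
    _ = ∑ l, ∫ ω, (∑ k ∈ s, Y k ω l) ^ 2 ∂μ := by
        refine sum_congr rfl fun l _ => (integral_sq_sum_eq_sum_integral_sq
          (fun k hk => (EuclideanSpace.proj (𝕜 := ℝ) l).comp_memLp' (hY k hk))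
          (fun k hk => hmean k hk l)
          (fun j hj k hk hjk => (hind hj hk hjk).comp (hproj l) (hproj l))).symm
    _ = Fintype.card ι := by simp [hvar]

lemma ProbabilityTheory.iIndepFun.pairwise_indepFun_range {β : Type*} [MeasurableSpace β]
    {Y : ℕ → Ω → β} {n : ℕ}
    (h : iIndepFun (fun k : Fin n => Y k) μ) :
    Set.Pairwise ↑(range n) fun j k => Y j ⟂ᵢ[μ] Y k := by
  intro j hj k hk hjk
  simp only [coe_range, Set.mem_Iio] at hj hk
  exact h.indepFun (i := ⟨j, hj⟩) (j := ⟨k, hk⟩) (by simpa using hjk)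

lemma ProbabilityTheory.IndepFun.setIntegral_preimage_eq_mul {α β : Type*}
    [MeasurableSpace α] [MeasurableSpace β]
    {X : Ω → α} {Y : Ω → β} (hXY : X ⟂ᵢ[μ] Y) {f : α → ℝ} (hf : Measurable f)
    (hX : Measurable X) (hY : Measurable Y) {B : Set β} (hB : MeasurableSet B) :
    ∫ ω in Y ⁻¹' B, f (X ω) ∂μ = (∫ ω, f (X ω) ∂μ) * μ.real (Y ⁻¹' B) := by
  have hind : (f ∘ X) ⟂ᵢ[μ] (B.indicator (1 : β → ℝ) ∘ Y) :=
    hXY.comp hf (measurable_one.indicator hB)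
  have hmul : (Y ⁻¹' B).indicator (fun ω => f (X ω)) =
      (f ∘ X) * (B.indicator (1 : β → ℝ) ∘ Y) := by
    ext ω; by_cases h : Y ω ∈ B <;> simp [h]
  rw [← integral_indicator (hY hB), hmul,
    hind.integral_mul_eq_mul_integral (hf.comp hX).aestronglyMeasurable
      ((measurable_one.indicator hB).comp hY).aestronglyMeasurable,
    ← integral_indicator_one (hY hB)]
  rfl

end

/-- The `+ 1` keeps the threshold positive also for `t = 0`. -/
lemma lt_norm_of_one_lt_abs_inner {E : Type*} [NormedAddCommGroup E] [InnerProductSpace ℝ E]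
    {x t : E} (h : 1 < |⟪x, t⟫|) : (‖t‖ + 1)⁻¹ < ‖x‖ := by
  have := h.trans_le (abs_real_inner_le_norm x t)
  rw [inv_lt_iff_one_lt_mul₀ (by positivity)]
  nlinarith [norm_nonneg x]

lemma le_iSup_mem_finset {ι : Type*} {s : Finset ι} {f : ι → ℝ} {i : ι} (hi : i ∈ s) :
    f i ≤ ⨆ j ∈ s, f j :=
  le_ciSup₂ (f := fun j _ => f j) ((s.finite_toSet.image f).bddAbove.mono <| by
    simp only [Set.iUnion_subset_iff, Set.range_subset_iff]
    exact fun j hj => ⟨j, hj, rfl⟩) i hi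

lemma tendsto_sum_of_le_mul_of_tendsto_iSup {a m p : ℕ → ℕ → ℝ} {C : ℝ}
    (ha : ∀ n k, 0 ≤ a n k) (hm : ∀ n k, 0 ≤ m n k) (hle : ∀ n k, a n k ≤ m n k * p n k)
    (hsum : ∀ᶠ n in atTop, ∑ k ∈ range n, m n k = C)
    (hsup : Tendsto (fun n => ⨆ k ∈ range n, p n k) atTop (nhds 0)) :
    Tendsto (fun n => ∑ k ∈ range n, a n k) atTop (nhds 0) := by
  refine tendsto_of_tendsto_of_tendsto_of_le_of_le' tendsto_const_nhds
    (by simpa only [mul_zero] using hsup.const_mul C)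
    (Eventually.of_forall fun n => sum_nonneg fun k _ => ha n k) ?_
  filter_upwards [hsum] with n hn
  calc ∑ k ∈ range n, a n k ≤ ∑ k ∈ range n, m n k * ⨆ j ∈ range n, p n j :=
        sum_le_sum fun k hk => (hle n k).trans <|
          mul_le_mul_of_nonneg_left (le_iSup_mem_finset hk) (hm n k)
    _ = C * ⨆ j ∈ range n, p n j := by rw [← sum_mul, hn]

/-- If an `N`-dimensional standard triangular array `{Ξ_{n,k}}` is infinitesimal and
`{Ξ⁰_{n,k}}` is an independent copy of it, then `L({Ξ_{n,k}}, {Ξ⁰_{n,k}}) = 0`. -/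
theorem infinitesimal_implies_L_indep_copy_zero
    (N : ℕ)
    {Ω : Type*} [MeasureSpace Ω] [IsProbabilityMeasure (ℙ : Measure Ω)]
    (X X₀ : ℕ → ℕ → Ω → EuclideanSpace ℝ (Fin N))
    (hmeas : ∀ n k, Measurable (X n k))
    (hmeas₀ : ∀ n k, Measurable (X₀ n k))
    (hL2 : ∀ n k, MemLp (X n k) 2 ℙ)
    (hindep : ∀ n, iIndepFun (fun k : Fin n => X n k) ℙ)
    (hmean : ∀ n k l, ∫ ω, X n k ω l = 0)
    (hcov : ∀ n, 1 ≤ n → ∀ l m : Fin N,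
      ∫ ω, (∑ k ∈ Finset.range n, X n k ω l) * (∑ k ∈ Finset.range n, X n k ω m) =
        if l = m then 1 else 0)
    -- `{X₀}` has the same joint distributions as `{X}` (hence it is also an `N`-STA) ...
    (hcopy : Measure.map (fun ω (p : ℕ × ℕ) => X p.1 p.2 ω) ℙ =
             Measure.map (fun ω (p : ℕ × ℕ) => X₀ p.1 p.2 ω) ℙ)
    -- ... and is independent of `{X}`:
    (hindepcopy : IndepFun (fun ω (p : ℕ × ℕ) => X p.1 p.2 ω)
                           (fun ω (p : ℕ × ℕ) => X₀ p.1 p.2 ω) ℙ)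
    -- `{X}` is infinitesimal:
    (hinf : ∀ ε > (0 : ℝ), Tendsto (fun n =>
      ⨆ k ∈ Finset.range n, (ℙ {ω | ε < ‖X n k ω‖}).toReal) atTop (nhds 0)) :
    (⨆ t : EuclideanSpace ℝ (Fin N), limsup (fun n => ∑ k ∈ Finset.range n,
      ∫ ω in {ω | 1 < |(⟪X₀ n k ω, t⟫ : ℝ)|}, ‖X n k ω‖ ^ 2) atTop) = 0 := by
  have hident : ∀ n k, IdentDistrib (X n k) (X₀ n k) := fun n k =>
    (show IdentDistrib (fun ω (p : ℕ × ℕ) => X p.1 p.2 ω) (fun ω p => X₀ p.1 p.2 ω) ℙ ℙ from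
      ⟨(measurable_pi_iff.2 fun p : ℕ × ℕ => hmeas p.1 p.2).aemeasurable,
        (measurable_pi_iff.2 fun p : ℕ × ℕ => hmeas₀ p.1 p.2).aemeasurable, hcopy⟩).comp
      (measurable_pi_apply (n, k))
  have hindk : ∀ n k, X n k ⟂ᵢ X₀ n k := fun n k =>
    hindepcopy.comp (measurable_pi_apply (n, k)) (measurable_pi_apply (n, k))
  have hsecond : ∀ᶠ n in atTop, ∑ k ∈ range n, ∫ ω, ‖X n k ω‖ ^ 2 = N := by
    filter_upwards [eventually_ge_atTop 1] with n hn
    simpa using sum_integral_norm_sq_eq_card (fun k _ => hL2 n k) (fun k _ => hmean n k)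
      (hindep n).pairwise_indepFun_range (fun l => by simpa [sq] using hcov n hn l l)
  suffices ∀ t, limsup (fun n => ∑ k ∈ Finset.range n,
      ∫ ω in {ω | 1 < |(⟪X₀ n k ω, t⟫ : ℝ)|}, ‖X n k ω‖ ^ 2) atTop = 0 by
    simp_rw [this, ciSup_const]
  intro t
  set B := {y : EuclideanSpace ℝ (Fin N) | 1 < |⟪y, t⟫|}
  have hB : MeasurableSet B :=
    measurableSet_lt measurable_const (measurable_id.inner measurable_const).abs
  refine (tendsto_sum_of_le_mul_of_tendsto_iSup
    (fun n k => setIntegral_nonneg (hmeas₀ n k hB) fun ω _ => by positivity)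
    (fun n k => integral_nonneg fun ω => by positivity) (fun n k => ?_) hsecond
    (hinf (‖t‖ + 1)⁻¹ (by positivity))).limsup_eq
  calc ∫ ω in X₀ n k ⁻¹' B, ‖X n k ω‖ ^ 2
      = (∫ ω, ‖X n k ω‖ ^ 2) * (ℙ (X n k ⁻¹' B)).toReal := by
        rw [(hindk n k).setIntegral_preimage_eq_mul (measurable_norm.pow_const 2) (hmeas n k)
          (hmeas₀ n k) hB, measureReal_def, (hident n k).measure_mem_eq hB]
    _ ≤ (∫ ω, ‖X n k ω‖ ^ 2) * (ℙ {ω | (‖t‖ + 1)⁻¹ < ‖X n k ω‖}).toReal := by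
        gcongr
        · exact measure_ne_top _ _
        · exact fun ω => lt_norm_of_one_lt_abs_inner
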